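/- Let γ: 𝕋¹ → ℝ³ be a closed C¹ curve with unit speed, i.e. |γ'(x)| = 1 for all x. Then the distortion δ_∞(γ) := sup_{x≠y} ϑ(x-y)/|γ(x)-γ(y)| satisfies δ_∞(γ) ≥ π/2. -/

import Mathlib

open MeasureTheory Real

/-- Geodesic distance on the torus `𝕋¹ = [-π,π]` with endpoints identified:
`ϑ(z) = min{|z|, 2π-|z|}` extended `2π`-periodically. -/
noncomputable def vartheta (z : ℝ) : ℝ :=
  |z - 2 * π * ((round (z / (2 * π)) : ℤ) : ℝ)|

/-! For a `T`-periodic curve of speed at most `1`, the chord map `w x = γ (x + T / 2) - γ x` is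
`T / 2`-antiperiodic, so it has mean zero, and `‖w'‖ ≤ 2`. Wirtinger's inequality, obtained from
Parseval's identity by comparing the Fourier coefficients of `w` and `w'`, bounds the mean of `‖w‖²`
by `(T / 2π)² · 4`, so some chord between parameters `T / 2` apart has length at most `T / π`.
For `T = 2π` the two parameters are at torus distance `π` while the chord has length at most `2`. -/

open Set

lemma ContinuousOn.memLp_two_restrict_Ioc {E : Type*} [NormedAddCommGroup E] {f : ℝ → E}
    {a b : ℝ} (hf : ContinuousOn f (Icc a b)) : MemLp f 2 (volume.restrict (Ioc a b)) :=
  (memLp_two_iff_integrable_sq_norm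
    ((hf.mono Ioc_subset_Icc_self).aestronglyMeasurable measurableSet_Ioc)).2
    ((hf.norm.pow 2).integrableOn_Icc.mono_set Ioc_subset_Icc_self)

lemma norm_fourierCoeffOn_le_of_hasDerivAt {a b : ℝ} (hab : a < b) {f f' : ℝ → ℂ}
    (hf : ∀ x ∈ uIcc a b, HasDerivAt f (f' x) x) (hf' : IntervalIntegrable f' volume a b)
    (hfab : f b = f a) {n : ℤ} (hn : n ≠ 0) :
    ‖fourierCoeffOn hab f n‖ ≤ (b - a) / (2 * π) * ‖fourierCoeffOn hab f' n‖ := by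
  rw [fourierCoeffOn_of_hasDerivAt hab hn hf hf', hfab, sub_self, mul_zero, zero_sub]
  have hn1 : (1 : ℝ) ≤ |(n : ℝ)| := by exact_mod_cast Int.one_le_abs hn
  have hba : 0 < b - a := sub_pos.2 hab
  rw [← Complex.ofReal_sub]
  simp only [norm_mul, norm_neg, norm_div, norm_one, Complex.norm_I, Complex.norm_intCast,
    Complex.norm_real, Complex.norm_ofNat, norm_of_nonneg pi_pos.le, norm_of_nonneg hba.le]
  calc 1 / (2 * π * 1 * |(n : ℝ)|) * ((b - a) * ‖fourierCoeffOn hab f' n‖)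
      = (b - a) / (2 * π) * ‖fourierCoeffOn hab f' n‖ / |(n : ℝ)| := by ring
    _ ≤ (b - a) / (2 * π) * ‖fourierCoeffOn hab f' n‖ := div_le_self (by positivity) hn1

theorem Complex.integral_norm_sq_le_of_integral_eq_zero {a b : ℝ} (hab : a < b) {f f' : ℝ → ℂ}
    (hf : ∀ x ∈ Icc a b, HasDerivAt f (f' x) x) (hf' : ContinuousOn f' (Icc a b))
    (hfab : f b = f a) (hmean : ∫ x in a..b, f x = 0) :
    ∫ x in a..b, ‖f x‖ ^ 2 ≤ ((b - a) / (2 * π)) ^ 2 * ∫ x in a..b, ‖f' x‖ ^ 2 := by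
  have hba : 0 < b - a := sub_pos.2 hab
  have hfc : ContinuousOn f (Icc a b) := fun x hx => (hf x hx).continuousAt.continuousWithinAt
  rw [← uIcc_of_le hab.le] at hf
  have hcoeff : ∀ n : ℤ, ‖fourierCoeffOn hab f n‖ ^ 2 ≤
      ((b - a) / (2 * π)) ^ 2 * ‖fourierCoeffOn hab f' n‖ ^ 2 := by
    intro n
    rcases eq_or_ne n 0 with rfl | hn
    · simp only [fourierCoeffOn_eq_integral, neg_zero, fourier_zero, one_smul, hmean, smul_zero,
        norm_zero, zero_pow two_ne_zero]
      positivity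
    · rw [← mul_pow]
      exact pow_le_pow_left₀ (norm_nonneg _) (norm_fourierCoeffOn_le_of_hasDerivAt hab hf
        (hf'.intervalIntegrable_of_Icc hab.le) hfab hn) 2
  have hparseval := hasSum_le hcoeff
    (hasSum_sq_fourierCoeffOn hab hfc.memLp_two_restrict_Ioc)
    ((hasSum_sq_fourierCoeffOn hab hf'.memLp_two_restrict_Ioc).mul_left _)
  rw [smul_eq_mul, smul_eq_mul, mul_left_comm] at hparseval
  exact le_of_mul_le_mul_left hparseval (inv_pos.2 hba)

theorem EuclideanSpace.integral_norm_sq_le_of_integral_eq_zero {ι : Type*} [Fintype ι]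
    {a b : ℝ} (hab : a < b) {w w' : ℝ → EuclideanSpace ℝ ι}
    (hw : ∀ x ∈ Icc a b, HasDerivAt w (w' x) x) (hw' : ContinuousOn w' (Icc a b))
    (hwab : w b = w a) (hmean : ∫ x in a..b, w x = 0) :
    ∫ x in a..b, ‖w x‖ ^ 2 ≤ ((b - a) / (2 * π)) ^ 2 * ∫ x in a..b, ‖w' x‖ ^ 2 := by
  have hwc : ContinuousOn w (Icc a b) := fun x hx => (hw x hx).continuousAt.continuousWithinAt
  have hcomponent : ∀ i, ∫ x in a..b, ‖w x i‖ ^ 2 ≤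
      ((b - a) / (2 * π)) ^ 2 * ∫ x in a..b, ‖w' x i‖ ^ 2 := by
    intro i
    have hmean_i : ∫ x in a..b, ((w x i : ℝ) : ℂ) = 0 := by
      have h := (EuclideanSpace.proj i).intervalIntegral_comp_comm
        (hwc.intervalIntegrable_of_Icc (μ := volume) hab.le)
      rw [hmean, map_zero] at h
      rw [intervalIntegral.integral_ofReal]
      exact_mod_cast h
    simpa only [Complex.norm_real] using Complex.integral_norm_sq_le_of_integral_eq_zero hab
      (f' := fun x => ((w' x i : ℝ) : ℂ))
      (fun x hx => ((EuclideanSpace.proj i).hasFDerivAt.comp_hasDerivAt x (hw x hx)).ofReal_comp)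
      (Complex.continuous_ofReal.comp_continuousOn
        ((EuclideanSpace.proj i).continuous.comp_continuousOn hw'))
      (by simp [hwab]) hmean_i
  have hsum : ∀ v : ℝ → EuclideanSpace ℝ ι, ContinuousOn v (Icc a b) →
      ∫ x in a..b, ‖v x‖ ^ 2 = ∑ i, ∫ x in a..b, ‖v x i‖ ^ 2 := fun v hv => by
    simp_rw [EuclideanSpace.norm_sq_eq]
    exact intervalIntegral.integral_finsetSum fun i _ =>
      (((EuclideanSpace.proj i).continuous.comp_continuousOn hv).norm.pow 2).intervalIntegrable_of_Icc
        hab.le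
  rw [hsum w hwc, hsum w' hw', Finset.mul_sum]
  exact Finset.sum_le_sum fun i _ => hcomponent i

theorem Function.Antiperiodic.intervalIntegral_eq_zero {E : Type*} [NormedAddCommGroup E]
    [NormedSpace ℝ E] {f : ℝ → E} {c : ℝ} (hf : Function.Antiperiodic f c) (a : ℝ) :
    ∫ x in a..a + 2 * c, f x = 0 := by
  have hshift : ∫ x in a..a + 2 * c, f x = ∫ x in a + c..a + c + 2 * c, f x :=
    hf.periodic_two_mul.intervalIntegral_add_eq a (a + c)
  rw [← add_right_comm, ← intervalIntegral.integral_comp_add_right] at hshift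
  simp only [hf _, intervalIntegral.integral_neg] at hshift
  rw [eq_neg_iff_add_eq_zero, ← two_smul ℝ] at hshift
  exact (smul_eq_zero.1 hshift).resolve_left two_ne_zero

theorem exists_norm_sub_half_period_le {ι : Type*} [Fintype ι] {T : ℝ} (hT : 0 < T)
    {γ γ' : ℝ → EuclideanSpace ℝ ι} (hper : Function.Periodic γ T)
    (hderiv : ∀ x, HasDerivAt γ (γ' x) x) (hcont : Continuous γ') (hspeed : ∀ x, ‖γ' x‖ ≤ 1) :
    ∃ x, ‖γ (x + T / 2) - γ x‖ ≤ T / π := by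
  set w := fun x => γ (x + T / 2) - γ x
  set w' := fun x => γ' (x + T / 2) - γ' x
  have hanti : Function.Antiperiodic w (T / 2) := fun x => by
    simp only [w, add_assoc, add_halves, hper x, neg_sub]
  have hw : ∀ x, HasDerivAt w (w' x) x := fun x =>
    ((hderiv _).comp_add_const x (T / 2)).sub (hderiv x)
  have hwc : Continuous w := continuous_iff_continuousAt.2 fun x => (hw x).continuousAt
  have hw'c : Continuous w' := (hcont.comp (continuous_add_const _)).sub hcont
  have hw'_le : ∀ x, ‖w' x‖ ^ 2 ≤ 2 ^ 2 := fun x => by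
    gcongr
    calc ‖w' x‖ ≤ ‖γ' (x + T / 2)‖ + ‖γ' x‖ := norm_sub_le _ _
      _ ≤ 2 := by linarith [hspeed x, hspeed (x + T / 2)]
  have hT2 : 2 * (T / 2) = T := mul_div_cancel₀ T two_ne_zero
  have hwirtinger := EuclideanSpace.integral_norm_sq_le_of_integral_eq_zero hT
    (fun x _ => hw x) hw'c.continuousOn
    (by simpa [hT2] using hanti.periodic_two_mul 0)
    (by simpa [hT2] using hanti.intervalIntegral_eq_zero 0)
  have hw'_int : ∫ x in 0..T, ‖w' x‖ ^ 2 ≤ T * 2 ^ 2 := by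
    simpa [hT.le] using intervalIntegral.integral_mono_on (μ := volume) hT.le
      ((hw'c.norm.pow 2).intervalIntegrable _ _) intervalIntegrable_const fun x _ => hw'_le x
  have hupper : ∫ x in 0..T, ‖w x‖ ^ 2 ≤ T * (T / π) ^ 2 := calc
    _ ≤ ((T - 0) / (2 * π)) ^ 2 * ∫ x in 0..T, ‖w' x‖ ^ 2 := hwirtinger
    _ ≤ ((T - 0) / (2 * π)) ^ 2 * (T * 2 ^ 2) := by gcongr
    _ = T * (T / π) ^ 2 := by field_simp; ring
  by_contra! hfar
  have hlower : ∫ x in 0..T, (T / π) ^ 2 < ∫ x in 0..T, ‖w x‖ ^ 2 :=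
    intervalIntegral.integral_lt_integral_of_continuousOn_of_le_of_exists_lt hT
      continuousOn_const (hwc.norm.pow 2).continuousOn
      (fun x _ => pow_le_pow_left₀ (by positivity) (hfar x).le 2)
      ⟨0, left_mem_Icc.2 hT.le, pow_lt_pow_left₀ (hfar 0) (by positivity) two_ne_zero⟩
  rw [intervalIntegral.integral_const, smul_eq_mul, sub_zero] at hlower
  linarith

lemma vartheta_pi : vartheta π = π := by
  have hround : round (π / (2 * π)) = 1 := by
    rw [div_mul_cancel_right₀ pi_ne_zero, ← one_div]
    norm_num [round_eq]
  rw [vartheta, hround, Int.cast_one, mul_one, show π - 2 * π = -π by ring, abs_neg,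
    abs_of_pos pi_pos]

/-- If `γ : 𝕋¹ → ℝ³` is a closed `C¹` curve with unit speed, then the distortion
`δ_∞(γ) = sup_{x≠y} ϑ(x-y)/|γ(x)-γ(y)|` satisfies `δ_∞(γ) ≥ π/2`; equivalently, for any
`ε > 0` there are points `x, y` with `ϑ(x-y) > 0` and `ϑ(x-y) ≥ (π/2-ε)·|γ(x)-γ(y)|`. -/
theorem stmt4 (γ γ' : ℝ → EuclideanSpace ℝ (Fin 3))
    (hper : Function.Periodic γ (2 * π))
    (hderiv : ∀ x, HasDerivAt γ (γ' x) x)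
    (hcont : Continuous γ')
    (hspeed : ∀ x, ‖γ' x‖ = 1) :
    ∀ ε : ℝ, 0 < ε → ∃ x y : ℝ,
      0 < vartheta (x - y) ∧ (π / 2 - ε) * ‖γ x - γ y‖ ≤ vartheta (x - y) := by
  intro ε hε
  obtain ⟨x, hx⟩ := exists_norm_sub_half_period_le two_pi_pos hper hderiv hcont
    fun x => (hspeed x).le
  rw [mul_div_cancel_left₀ π two_ne_zero, mul_div_cancel_right₀ 2 pi_ne_zero] at hx
  refine ⟨x + π, x, ?_, ?_⟩ <;> rw [add_sub_cancel_left, vartheta_pi]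
  · exact pi_pos
  · calc (π / 2 - ε) * ‖γ (x + π) - γ x‖ ≤ π / 2 * ‖γ (x + π) - γ x‖ := by gcongr; linarith
      _ ≤ π / 2 * 2 := by gcongr
      _ = π := by ring
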